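/- arXiv:math/0508203 — 2 statements merged into one kernel-verified Lean document; each statement's English description precedes it below -/
import Mathlib

section
/- In the quotient group B3/R, the image of σ2 satisfies σ2⁴ = 1, where R is the normal closure of {σ1σ2²σ1, σ1²σ2², σ2σ1²σ2}. -/
/-- The braid relation for the braid group on 3 strands:
`σ₁σ₂σ₁ = σ₂σ₁σ₂` as a relator in the free group on two generators. -/
def braidRels : Set (FreeGroup (Fin 2)) :=
  {FreeGroup.of 0 * FreeGroup.of 1 * FreeGroup.of 0 *
    (FreeGroup.of 1)⁻¹ * (FreeGroup.of 0)⁻¹ * (FreeGroup.of 1)⁻¹}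

/-- The braid group `B₃ = ⟨σ₁, σ₂ | σ₁σ₂σ₁ = σ₂σ₁σ₂⟩`. -/
abbrev B3 := PresentedGroup braidRels

def σ1 : B3 := PresentedGroup.of 0
def σ2 : B3 := PresentedGroup.of 1

def r1 : B3 := σ1 * σ2 ^ 2 * σ1
def r2 : B3 := σ1 ^ 2 * σ2 ^ 2
def r3 : B3 := σ2 * σ1 ^ 2 * σ2

lemma braid : σ1 * σ2 * σ1 = σ2 * σ1 * σ2 := by
  have h : (PresentedGroup.mk braidRels)
      (FreeGroup.of 0 * FreeGroup.of 1 * FreeGroup.of 0 *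
        (FreeGroup.of 1)⁻¹ * (FreeGroup.of 0)⁻¹ * (FreeGroup.of 1)⁻¹) = 1 := by
    apply (QuotientGroup.eq_one_iff _).mpr
    exact Subgroup.subset_normalClosure rfl
  have h' : σ1 * σ2 * σ1 * σ2⁻¹ * σ1⁻¹ * σ2⁻¹ = 1 := by
    simpa [σ1, σ2, PresentedGroup.of, map_mul, map_inv] using h
  rw [← mul_inv_eq_one, mul_inv_rev, mul_inv_rev]
  simpa [mul_assoc] using h' 

theorem stmt11 : (QuotientGroup.mk' (Subgroup.normalClosure {r1, r2, r3})) σ2 ^ 4 = 1 := by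
  set f := QuotientGroup.mk' (Subgroup.normalClosure {r1, r2, r3}) with hf
  set a := f σ1 with ha
  set b := f σ2 with hb
  have h1 : a * b ^ 2 * a = 1 := by
    rw [ha, hb, ← map_pow, ← map_mul, ← map_mul]
    exact (QuotientGroup.eq_one_iff _).mpr
      (Subgroup.subset_normalClosure (by simp [r1]))
  have h2 : a ^ 2 * b ^ 2 = 1 := by
    rw [ha, hb, ← map_pow, ← map_pow, ← map_mul]
    exact (QuotientGroup.eq_one_iff _).mpr
      (Subgroup.subset_normalClosure (by simp [r2]))
  have h3 : b * a ^ 2 * b = 1 := by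
    rw [hb, ha, ← map_pow, ← map_mul, ← map_mul]
    exact (QuotientGroup.eq_one_iff _).mpr
      (Subgroup.subset_normalClosure (by simp [r3]))
  have hbr : a * b * a = b * a * b := by
    rw [ha, hb, ← map_mul, ← map_mul, ← map_mul, ← map_mul, braid]
  -- b^2 commutes with a
  have hcomm : b ^ 2 * a = a * b ^ 2 := by
    have : a * b ^ 2 * a = a * (a * b ^ 2) := by
      rw [h1, ← mul_assoc, ← sq, h2]
    exact mul_left_cancel (by rw [← mul_assoc, this])
  -- a^2 commutes with b
  have hcomm' : a ^ 2 * b = b * a ^ 2 := by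
    have : a ^ 2 * b * b = b * a ^ 2 * b := by
      rw [h3, mul_assoc, ← sq, h2]
    exact mul_right_cancel this
  have hbr2 : a * (b * a) = b * (a * b) := by simpa [mul_assoc] using hbr
  have hca2 : b * (a * a) = a * (a * b) := by simpa [sq, mul_assoc] using hcomm'.symm
  have hcb2 : a * (b * b) = b * (b * a) := by simpa [sq, mul_assoc] using hcomm.symm
  -- key: b * a^3 = b^3 * a
  have key : b * (a * (a * a)) = b * (b * (b * a)) := by
    calc b * (a * (a * a)) = b * (a * a) * a := by simp [mul_assoc]
      _ = a * (a * b) * a := by rw [hca2]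
      _ = a * (a * (b * a)) := by simp [mul_assoc]
      _ = a * (b * (a * b)) := by rw [hbr2]
      _ = a * (b * a) * b := by simp [mul_assoc]
      _ = b * (a * b) * b := by rw [hbr2]
      _ = b * (a * (b * b)) := by simp [mul_assoc]
      _ = b * (b * (b * a)) := by rw [hcb2]
  have key2 : a * a = b * b := by
    have h4 : a * (a * a) = b * (b * a) := mul_left_cancel key
    have h5 : (a * a) * a = (b * b) * a := by simpa [mul_assoc] using h4
    exact mul_right_cancel h5
  calc b ^ 4 = (b * b) * b ^ 2 := by simp [pow_succ, mul_assoc]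
    _ = (a * a) * b ^ 2 := by rw [key2]
    _ = a ^ 2 * b ^ 2 := by rw [sq a]
    _ = 1 := h2
end

section
/- In the quotient B3/R, where R is the normal closure of {σ1σ2²σ1, σ1²σ2², σ2σ1²σ2}, the image of the full twist d = (σ2σ1)³ equals σ1², and hence d² = 1. -/
/-- Abstract computation: in any group with the braid relation and the
relations `A²B² = 1`, `BA²B = 1`, we have `(BA)³ = A²` and `A⁴ = 1`. -/
lemma key {G : Type*} [Group G] (A B : G)
    (hbr : A * B * A = B * A * B)
    (e2 : A * A * (B * B) = 1)
    (e3 : B * (A * A) * B = 1) :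
    (B * A) ^ 3 = A * A ∧ (A * A) * (A * A) = 1 := by
  -- A² and B·A² both equal B⁻¹, so A² commutes with B
  have hAAB : A * A * B = B⁻¹ := by
    have : (A * A * B) * B = 1 := by rw [← e2]; group
    exact eq_inv_of_mul_eq_one_left this
  have hBAA : B * (A * A) = B⁻¹ := by
    have : (B * (A * A)) * B = 1 := by rw [← e3]
    exact eq_inv_of_mul_eq_one_left this
  have hcomm : B * (A * A) = A * A * B := by rw [hBAA, hAAB]
  -- (BA)³ = A²
  have g1 : (B * A) ^ 3 = A * A := by
    calc (B * A) ^ 3 = B * A * (B * A * B) * A := by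
          rw [pow_succ, pow_succ, pow_one]; group
      _ = B * A * (A * B * A) * A := by rw [← hbr]
      _ = B * (A * A) * B * (A * A) := by group
      _ = A * A := by rw [e3, one_mul]
  -- (AB)³ = A²
  have g2 : (A * B) ^ 3 = A * A := by
    calc (A * B) ^ 3 = A * (B * A * B) * (A * B) := by
          rw [pow_succ, pow_succ, pow_one]; group
      _ = A * (A * B * A) * (A * B) := by rw [← hbr]
      _ = A * A * (B * (A * A) * B) := by group
      _ = A * A := by rw [e3, mul_one]
  -- conjugation by ABA inverts AB
  have hconj : (A * B * A) * (A * B) * (A * B * A)⁻¹ = (A * B)⁻¹ := by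
    calc (A * B * A) * (A * B) * (A * B * A)⁻¹
        = A * (B * (A * A) * B) * (A⁻¹ * B⁻¹ * A⁻¹) := by group
      _ = (A * B)⁻¹ := by rw [e3]; group
  -- hence conjugation by ABA inverts (AB)³ = A²
  have h5 : (A * B * A) * ((A * B) ^ 3) * (A * B * A)⁻¹ = ((A * B) ^ 3)⁻¹ := by
    rw [← conj_pow, hconj, inv_pow]
  -- but A² is central, so A² = A⁻²
  have hcent : (A * B * A) * (A * A) * (A * B * A)⁻¹ = A * A := by
    calc (A * B * A) * (A * A) * (A * B * A)⁻¹
        = A * (B * (A * A)) * (B⁻¹ * A⁻¹) := by group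
      _ = A * (A * A * B) * (B⁻¹ * A⁻¹) := by rw [hcomm]
      _ = A * A := by group
  rw [g2] at h5
  rw [hcent] at h5
  refine ⟨g1, ?_⟩
  nth_rewrite 1 [h5]
  exact inv_mul_cancel _

theorem stmt17 :
    (QuotientGroup.mk' (Subgroup.normalClosure {r1, r2, r3})) ((σ2 * σ1) ^ 3) = (QuotientGroup.mk' (Subgroup.normalClosure {r1, r2, r3})) (σ1 ^ 2) ∧ (QuotientGroup.mk' (Subgroup.normalClosure {r1, r2, r3})) ((σ2 * σ1) ^ 3) ^ 2 = 1 := by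
  have hrelB3 : σ1 * σ2 * σ1 * σ2⁻¹ * σ1⁻¹ * σ2⁻¹ = (1 : B3) := by
    have h : (FreeGroup.of 0 * FreeGroup.of 1 * FreeGroup.of 0 *
        (FreeGroup.of 1)⁻¹ * (FreeGroup.of 0)⁻¹ * (FreeGroup.of 1)⁻¹ : FreeGroup (Fin 2)) ∈
        Subgroup.normalClosure braidRels :=
      Subgroup.subset_normalClosure (Set.mem_singleton _)
    exact (QuotientGroup.eq_one_iff _).mpr h
  have hbrB3 : σ1 * σ2 * σ1 = σ2 * σ1 * σ2 := by
    calc σ1 * σ2 * σ1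
        = (σ1 * σ2 * σ1 * σ2⁻¹ * σ1⁻¹ * σ2⁻¹) * (σ2 * σ1 * σ2) := by group
      _ = σ2 * σ1 * σ2 := by rw [hrelB3, one_mul]
  set π := QuotientGroup.mk' (Subgroup.normalClosure ({r1, r2, r3} : Set B3)) with hπ
  have hbr : π σ1 * π σ2 * π σ1 = π σ2 * π σ1 * π σ2 := by
    rw [← map_mul, ← map_mul, ← map_mul, ← map_mul, hbrB3]
  have e2 : π σ1 * π σ1 * (π σ2 * π σ2) = 1 := by
    have h : π r2 = 1 := (QuotientGroup.eq_one_iff _).mpr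
      (Subgroup.subset_normalClosure (by simp))
    change π (σ1 ^ 2 * σ2 ^ 2) = 1 at h
    simpa [map_mul, map_pow, sq, mul_assoc] using h
  have e3 : π σ2 * (π σ1 * π σ1) * π σ2 = 1 := by
    have h : π r3 = 1 := (QuotientGroup.eq_one_iff _).mpr
      (Subgroup.subset_normalClosure (by simp))
    change π (σ2 * σ1 ^ 2 * σ2) = 1 at h
    simpa [map_mul, map_pow, sq, mul_assoc] using h
  obtain ⟨g1, g2⟩ := key (π σ1) (π σ2) hbr e2 e3
  have hπBA : π ((σ2 * σ1) ^ 3) = (π σ2 * π σ1) ^ 3 := by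
    rw [map_pow, map_mul]
  have hπA2 : π (σ1 ^ 2) = π σ1 * π σ1 := by
    rw [map_pow, sq]
  constructor
  · rw [hπBA, hπA2, g1]
  · rw [hπBA, g1, sq]; exact g2
end
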